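/- Let d₁, d₂ be positive integers, A a d₁×d₁ real symmetric matrix, D a d₂×d₂ real symmetric matrix, and P a d₁×d₂ real matrix, and let J = [[A, P], [Pᵀ, D]]. If λmax(D) < λmin(A), then J has no eigenvalue in the open interval (λmax(D), λmin(A)). Symmetrically, if λmax(A) < λmin(D), then J has no eigenvalue in the open interval (λmax(A), λmin(D)). -/

import Mathlib

/-!
If `J (x, y) = μ (x, y)`, the two block rows give `(A - μ) x = -P y` and `(μ - D) y = Pᵀ x`, so
`x ⬝ (A - μ) x + y ⬝ (μ - D) y = -x ⬝ P y + y ⬝ Pᵀ x = 0`. For `λmax(D) < μ < λmin(A)` both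
`A - μ` and `μ - D` are positive definite, which forces `x = y = 0`. The second case is the first
one applied to `-J` and `-μ`.
-/

open Matrix

/-- Smallest eigenvalue of a Hermitian (real symmetric) matrix. -/
noncomputable def lamMin {n : Type*} [Fintype n] [DecidableEq n] {A : Matrix n n ℝ}
    (hA : A.IsHermitian) : ℝ := ⨅ i, hA.eigenvalues i

/-- Largest eigenvalue of a Hermitian (real symmetric) matrix. -/
noncomputable def lamMax {n : Type*} [Fintype n] [DecidableEq n] {A : Matrix n n ℝ}
    (hA : A.IsHermitian) : ℝ := ⨆ i, hA.eigenvalues i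

namespace Matrix

open scoped ComplexOrder

variable {m n : Type*} [Fintype m] [Fintype n]

theorem PosDef.eq_zero_of_dotProduct_mulVec_nonpos {M : Matrix n n ℝ} (hM : M.PosDef)
    {x : n → ℝ} (h : x ⬝ᵥ (M *ᵥ x) ≤ 0) : x = 0 := by
  by_contra hx
  exact h.not_gt (by simpa using hM.dotProduct_mulVec_pos hx)

variable [DecidableEq m] [DecidableEq n]

theorem mem_spectrum_of_mem_spectrum_map {K L : Type*} [Field K] [Field L] [Algebra K L]
    {M : Matrix n n K} {μ : K}
    (h : algebraMap K L μ ∈ spectrum L (M.map (algebraMap K L))) : μ ∈ spectrum K M := by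
  rw [mem_spectrum_iff_isRoot_charpoly, charpoly_map, Polynomial.IsRoot,
    Polynomial.eval_map_algebraMap, Polynomial.aeval_algebraMap_apply_eq_algebraMap_eval,
    map_eq_zero_iff _ (algebraMap K L).injective] at h
  exact mem_spectrum_iff_isRoot_charpoly.mpr h

theorem exists_mulVec_eq_smul_of_mem_spectrum {K : Type*} [Field K] {M : Matrix n n K} {μ : K}
    (h : μ ∈ spectrum K M) : ∃ v ≠ 0, M *ᵥ v = μ • v := by
  rw [← spectrum_toLin', ← Module.End.hasEigenvalue_iff_mem_spectrum] at h
  obtain ⟨v, hv⟩ := h.exists_hasEigenvector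
  exact ⟨v, hv.2, by simpa using hv.apply_eq_smul⟩

section Hermitian

variable {𝕜 : Type*} [RCLike 𝕜]

open scoped MatrixOrder in
theorem IsHermitian.posDef_iff_spectrum_pos {M : Matrix n n 𝕜} (hM : M.IsHermitian) :
    M.PosDef ↔ ∀ x ∈ spectrum ℝ M, 0 < x := by
  rw [← isStrictlyPositive_iff_posDef,
    StarOrderedRing.isStrictlyPositive_iff_spectrum_pos (R := ℝ) M hM]

theorem isHermitian_algebraMap (μ : ℝ) : (algebraMap ℝ (Matrix n n 𝕜) μ).IsHermitian :=
  IsSelfAdjoint.algebraMap _ (.all μ)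

variable {A : Matrix n n 𝕜} {μ : ℝ}

theorem IsHermitian.posDef_sub_algebraMap (hA : A.IsHermitian)
    (h : ∀ i, μ < hA.eigenvalues i) : (A - algebraMap ℝ _ μ).PosDef := by
  rw [(hA.sub (isHermitian_algebraMap μ)).posDef_iff_spectrum_pos, ← spectrum.sub_singleton_eq,
    hA.spectrum_real_eq_range_eigenvalues]
  rintro _ ⟨_, ⟨i, rfl⟩, _, rfl, rfl⟩
  exact sub_pos.mpr (h i)

theorem IsHermitian.posDef_algebraMap_sub (hA : A.IsHermitian)
    (h : ∀ i, hA.eigenvalues i < μ) : (algebraMap ℝ _ μ - A).PosDef := by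
  rw [((isHermitian_algebraMap μ).sub hA).posDef_iff_spectrum_pos, ← spectrum.singleton_sub_eq,
    hA.spectrum_real_eq_range_eigenvalues]
  rintro _ ⟨_, rfl, _, ⟨i, rfl⟩, rfl⟩
  exact sub_pos.mpr (h i)

end Hermitian

section Blocks

variable {A : Matrix m m ℝ} {D : Matrix n n ℝ} {P : Matrix m n ℝ} {μ : ℝ} {v : m ⊕ n → ℝ}

theorem fromBlocks_eigenvector_dotProduct (hv : fromBlocks A P Pᵀ D *ᵥ v = μ • v) :
    (v ∘ Sum.inl) ⬝ᵥ ((A - algebraMap ℝ _ μ) *ᵥ (v ∘ Sum.inl)) +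
      (v ∘ Sum.inr) ⬝ᵥ ((algebraMap ℝ _ μ - D) *ᵥ (v ∘ Sum.inr)) = 0 := by
  set x := v ∘ Sum.inl
  set y := v ∘ Sum.inr
  rw [fromBlocks_mulVec] at hv
  have hx : A *ᵥ x + P *ᵥ y = μ • x := funext fun i => congrFun hv (Sum.inl i)
  have hy : Pᵀ *ᵥ x + D *ᵥ y = μ • y := funext fun i => congrFun hv (Sum.inr i)
  have hAx : (A - algebraMap ℝ _ μ) *ᵥ x = -(P *ᵥ y) := by
    rw [sub_mulVec, Algebra.algebraMap_eq_smul_one, smul_mulVec, one_mulVec, ← hx]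
    abel
  have hDy : (algebraMap ℝ _ μ - D) *ᵥ y = Pᵀ *ᵥ x := by
    rw [sub_mulVec, Algebra.algebraMap_eq_smul_one, smul_mulVec, one_mulVec, ← hy]
    abel
  rw [hAx, hDy, dotProduct_neg, dotProduct_mulVec y, vecMul_transpose, dotProduct_comm,
    neg_add_cancel]

theorem fromBlocks_eigenvector_eq_zero (hA : (A - algebraMap ℝ _ μ).PosDef)
    (hD : (algebraMap ℝ _ μ - D).PosDef) (hv : fromBlocks A P Pᵀ D *ᵥ v = μ • v) : v = 0 := by
  have hsum := fromBlocks_eigenvector_dotProduct hv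
  have hx := hA.posSemidef.dotProduct_mulVec_nonneg (v ∘ Sum.inl)
  have hy := hD.posSemidef.dotProduct_mulVec_nonneg (v ∘ Sum.inr)
  rw [star_trivial] at hx hy
  rw [← Sum.elim_comp_inl_inr v,
    hA.eq_zero_of_dotProduct_mulVec_nonpos (x := v ∘ Sum.inl) (by linarith),
    hD.eq_zero_of_dotProduct_mulVec_nonpos (x := v ∘ Sum.inr) (by linarith), Sum.elim_zero_zero]

theorem fromBlocks_eigenvector_eq_zero' (hA : (algebraMap ℝ _ μ - A).PosDef)
    (hD : (D - algebraMap ℝ _ μ).PosDef) (hv : fromBlocks A P Pᵀ D *ᵥ v = μ • v) : v = 0 := by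
  refine fromBlocks_eigenvector_eq_zero (A := -A) (D := -D) (P := -P) (μ := -μ) ?_ ?_ ?_
  · rwa [map_neg, sub_neg_eq_add, neg_add_eq_sub]
  · rwa [map_neg, sub_neg_eq_add, neg_add_eq_sub]
  · rw [transpose_neg, ← fromBlocks_neg, neg_mulVec, hv, neg_smul]

end Blocks

end Matrix

section Extremal

variable {n : Type*} [Fintype n] [DecidableEq n] {A : Matrix n n ℝ}

theorem lamMin_le_eigenvalues (hA : A.IsHermitian) (i : n) : lamMin hA ≤ hA.eigenvalues i :=
  ciInf_le (Finite.bddBelow_range _) i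

theorem eigenvalues_le_lamMax (hA : A.IsHermitian) (i : n) : hA.eigenvalues i ≤ lamMax hA :=
  le_ciSup (Finite.bddAbove_range _) i

end Extremal

theorem stmt7_general {d₁ d₂ : ℕ}
    (A : Matrix (Fin d₁) (Fin d₁) ℝ) (D : Matrix (Fin d₂) (Fin d₂) ℝ)
    (P : Matrix (Fin d₁) (Fin d₂) ℝ)
    (hA : A.IsHermitian) (hD : D.IsHermitian) :
    (lamMax hD < lamMin hA →
      ∀ μ : ℝ, (μ : ℂ) ∈ spectrum ℂ ((Matrix.fromBlocks A P Pᵀ D).map (algebraMap ℝ ℂ)) →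
        μ ∉ Set.Ioo (lamMax hD) (lamMin hA)) ∧
    (lamMax hA < lamMin hD →
      ∀ μ : ℝ, (μ : ℂ) ∈ spectrum ℂ ((Matrix.fromBlocks A P Pᵀ D).map (algebraMap ℝ ℂ)) →
        μ ∉ Set.Ioo (lamMax hA) (lamMin hD)) := by
  refine ⟨fun _ μ hμ hμI => ?_, fun _ μ hμ hμI => ?_⟩ <;>
    obtain ⟨v, hv0, hv⟩ := exists_mulVec_eq_smul_of_mem_spectrum
      (mem_spectrum_of_mem_spectrum_map hμ)
  · refine hv0 (fromBlocks_eigenvector_eq_zero ?_ ?_ hv)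
    · exact hA.posDef_sub_algebraMap fun i => hμI.2.trans_le (lamMin_le_eigenvalues hA i)
    · exact hD.posDef_algebraMap_sub fun i => (eigenvalues_le_lamMax hD i).trans_lt hμI.1
  · refine hv0 (fromBlocks_eigenvector_eq_zero' ?_ ?_ hv)
    · exact hA.posDef_algebraMap_sub fun i => (eigenvalues_le_lamMax hA i).trans_lt hμI.1
    · exact hD.posDef_sub_algebraMap fun i => hμI.2.trans_le (lamMin_le_eigenvalues hD i)

theorem stmt7 {d₁ d₂ : ℕ} (hd₁ : 0 < d₁) (hd₂ : 0 < d₂)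
    (A : Matrix (Fin d₁) (Fin d₁) ℝ) (D : Matrix (Fin d₂) (Fin d₂) ℝ)
    (P : Matrix (Fin d₁) (Fin d₂) ℝ)
    (hA : A.IsHermitian) (hD : D.IsHermitian) :
    (lamMax hD < lamMin hA →
      ∀ μ : ℝ, (μ : ℂ) ∈ spectrum ℂ ((Matrix.fromBlocks A P Pᵀ D).map (algebraMap ℝ ℂ)) →
        μ ∉ Set.Ioo (lamMax hD) (lamMin hA)) ∧
    (lamMax hA < lamMin hD →
      ∀ μ : ℝ, (μ : ℂ) ∈ spectrum ℂ ((Matrix.fromBlocks A P Pᵀ D).map (algebraMap ℝ ℂ)) →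
        μ ∉ Set.Ioo (lamMax hA) (lamMin hD)) :=
  stmt7_general A D P hA hD
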